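/- Suppose f : {0,1}^n → {0,1} has the property that f(x) is determined by the signs of k affine functionals: there exist affine maps ℓ₁,...,ℓ_k : ℝ^n → ℝ and a function G : {−1,0,1}^k → {0,1} with f(x) = G(sign(ℓ₁(x)),...,sign(ℓ_k(x))) for all x ∈ {0,1}^n. Then the average sensitivity of f is at most C·k·√n for some absolute constant C. -/

import Mathlib

/-!
Every sensitive edge of `f` changes the sign of some `ℓⱼ`, so it suffices to count, for a single
affine `ℓ`, the edges along which `g = sign ∘ ℓ` changes. Along each direction `i` the function `g`
is monotone or antitone, so its total variation `∑ₓ |g(x ⊕ eᵢ) - g(x)|` equals `2 |∑ₓ g(x) χᵢ(x)|`,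
twice a level-one Fourier coefficient. Since `|g| ≤ 1` and the characters `χᵢ` are orthogonal,
Cauchy–Schwarz gives `∑ᵢ |∑ₓ g(x) χᵢ(x)| ≤ √n · 2ⁿ`, hence `as(f) ≤ 2k√n`.
-/

open Finset

/-- Sensitivity of `f` at `x`. -/
def sens (n : ℕ) (f : (Fin n → Bool) → Bool) (x : Fin n → Bool) : ℕ :=
  (Finset.univ.filter fun i : Fin n => f (Function.update x i (!(x i))) ≠ f x).card

/-- Average sensitivity of `f`. -/
noncomputable def avgSens (n : ℕ) (f : (Fin n → Bool) → Bool) : ℝ :=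
  (∑ x : Fin n → Bool, (sens n f x : ℝ)) / 2 ^ n

namespace Real

theorem sign_monotone : Monotone Real.sign := fun a b h => by
  unfold Real.sign
  split_ifs <;> norm_num <;> linarith

theorem abs_sign_le_one (r : ℝ) : |Real.sign r| ≤ 1 := by
  rcases Real.sign_apply_eq r with h | h | h <;> rw [h] <;> norm_num

theorem one_le_abs_sign_sub_sign {a b : ℝ} (h : Real.sign a ≠ Real.sign b) :
    1 ≤ |Real.sign a - Real.sign b| := by
  rcases Real.sign_apply_eq a with ha | ha | ha <;>
    rcases Real.sign_apply_eq b with hb | hb | hb <;> revert h <;> rw [ha, hb] <;> norm_num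

end Real

namespace BooleanCube

variable {n : ℕ}

def flipCoord (i : Fin n) : Equiv.Perm (Fin n → Bool) :=
  Function.Involutive.toPerm (fun x => Function.update x i (!(x i))) fun x => by
    ext j
    rcases eq_or_ne j i with rfl | hj
    · simp
    · simp [Function.update_of_ne hj]

theorem flipCoord_apply (i : Fin n) (x : Fin n → Bool) :
    flipCoord i x = Function.update x i (!(x i)) := rfl

theorem sum_eq_zero_of_flipCoord_eq_neg {F : (Fin n → Bool) → ℝ} (i : Fin n)
    (hF : ∀ x, F (flipCoord i x) = -F x) : ∑ x, F x = 0 := by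
  have h := Equiv.sum_comp (flipCoord i) F
  rw [sum_congr rfl fun x _ => hF x, sum_neg_distrib] at h
  linarith

/-- `2 ^ n` times the influence of coordinate `i` on `g`. -/
def influenceCount {β : Type*} [DecidableEq β] (g : (Fin n → Bool) → β) (i : Fin n) : ℕ :=
  #{x | g (flipCoord i x) ≠ g x}

theorem sum_sens_eq_sum_influenceCount (f : (Fin n → Bool) → Bool) :
    ∑ x, sens n f x = ∑ i, influenceCount f i := by
  simp only [sens, influenceCount, card_filter]
  exact sum_comm

theorem influenceCount_comp_le {ι β γ : Type*} [Fintype ι] [DecidableEq β] [DecidableEq γ]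
    (G : (ι → β) → γ) (g : ι → (Fin n → Bool) → β) (i : Fin n) :
    influenceCount (fun x => G fun j => g j x) i ≤ ∑ j, influenceCount (g j) i := by
  classical
  refine (card_le_card fun x hx => ?_).trans card_biUnion_le
  have hx : G (fun j => g j (flipCoord i x)) ≠ G fun j => g j x := (mem_filter.mp hx).2
  obtain ⟨j, hj⟩ := Function.ne_iff.mp fun h => hx (congrArg G h)
  exact mem_biUnion.mpr ⟨j, mem_univ j, mem_filter.mpr ⟨mem_univ x, hj⟩⟩

def chi (i : Fin n) (x : Fin n → Bool) : ℝ := if x i then 1 else -1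

theorem chi_flipCoord_self (i : Fin n) (x : Fin n → Bool) :
    chi i (flipCoord i x) = -chi i x := by
  cases h : x i <;> simp [chi, flipCoord_apply, h]

theorem chi_flipCoord_of_ne {i j : Fin n} (h : j ≠ i) (x : Fin n → Bool) :
    chi j (flipCoord i x) = chi j x := by
  simp [chi, flipCoord_apply, Function.update_of_ne h]

theorem chi_mul_self (i : Fin n) (x : Fin n → Bool) : chi i x * chi i x = 1 := by
  unfold chi; split_ifs <;> norm_num

theorem sum_chi_mul_chi (i j : Fin n) :
    ∑ x, chi i x * chi j x = if i = j then 2 ^ n else 0 := by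
  split_ifs with hij
  · subst hij
    simp [chi_mul_self]
  · refine sum_eq_zero_of_flipCoord_eq_neg i fun x => ?_
    rw [chi_flipCoord_self, chi_flipCoord_of_ne (Ne.symm hij), neg_mul]

theorem sum_sq_sum_mul_chi (σ : Fin n → ℝ) :
    ∑ x, (∑ i, σ i * chi i x) ^ 2 = 2 ^ n * ∑ i, σ i ^ 2 := by
  calc ∑ x, (∑ i, σ i * chi i x) ^ 2
      = ∑ i, ∑ j, σ i * σ j * ∑ x, chi i x * chi j x := by
        rw [sum_congr rfl fun x _ => (sq _).trans (sum_mul_sum _ _ _ _)]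
        simp only [mul_sum]
        rw [sum_comm]
        refine sum_congr rfl fun i _ => ?_
        rw [sum_comm]
        refine sum_congr rfl fun j _ => sum_congr rfl fun x _ => by ring
    _ = 2 ^ n * ∑ i, σ i ^ 2 := by
        simp [sum_chi_mul_chi, mul_sum, sq, mul_comm]

theorem sum_abs_sum_mul_chi_le (g : (Fin n → Bool) → ℝ) (hg : ∀ x, |g x| ≤ 1) :
    ∑ i, |∑ x, g x * chi i x| ≤ √n * 2 ^ n := by
  set a : Fin n → ℝ := fun i => ∑ x, g x * chi i x
  set σ : Fin n → ℝ := fun i => if 0 ≤ a i then 1 else -1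
  set S : (Fin n → Bool) → ℝ := fun x => ∑ i, σ i * chi i x
  have habs : ∀ i, |a i| = σ i * a i := fun i => by
    by_cases h : 0 ≤ a i
    · simp [σ, h, abs_of_nonneg h]
    · simp [σ, h, abs_of_neg (not_le.mp h)]
  have hS : ∑ x, S x ^ 2 = 2 ^ n * n := by
    rw [sum_sq_sum_mul_chi]
    simp [σ, apply_ite (· ^ 2)]
  have hCS : (∑ x, |S x|) ^ 2 ≤ (√n * 2 ^ n) ^ 2 := by
    calc (∑ x, |S x|) ^ 2 ≤ 2 ^ n * ∑ x, |S x| ^ 2 := by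
          simpa using sq_sum_le_card_mul_sum_sq (s := univ) (f := fun x => |S x|)
      _ = (√n * 2 ^ n) ^ 2 := by
          rw [sum_congr rfl fun x _ => sq_abs (S x), hS, mul_pow,
            Real.sq_sqrt n.cast_nonneg]
          ring
  calc ∑ i, |a i| = ∑ x, g x * S x := by
        simp only [habs, a, S, mul_sum]
        rw [sum_comm]
        exact sum_congr rfl fun x _ => sum_congr rfl fun i _ => by ring
    _ ≤ ∑ x, |S x| := sum_le_sum fun x _ =>
        (le_abs_self _).trans <| by
          rw [abs_mul]; exact mul_le_of_le_one_left (abs_nonneg _) (hg x)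
    _ ≤ √n * 2 ^ n :=
        (pow_le_pow_iff_left₀ (sum_nonneg fun x _ => abs_nonneg _) (by positivity)
          two_ne_zero).mp hCS

def IsUnateIn {β : Type*} [Preorder β] (i : Fin n) (g : (Fin n → Bool) → β) : Prop :=
  (∀ x, g (Function.update x i false) ≤ g (Function.update x i true)) ∨
    ∀ x, g (Function.update x i true) ≤ g (Function.update x i false)

theorem sum_abs_sub_flipCoord_of_monotone {g : (Fin n → Bool) → ℝ} {i : Fin n}
    (hg : ∀ x, g (Function.update x i false) ≤ g (Function.update x i true)) :
    ∑ x, |g (flipCoord i x) - g x| = 2 * |∑ x, g x * chi i x| := by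
  have hterm : ∀ x, |g (flipCoord i x) - g x| = (g x - g (flipCoord i x)) * chi i x := by
    intro x
    have hx : Function.update x i (x i) = x := Function.update_eq_self i x
    cases h : x i <;> rw [h] at hx <;> have := hg x <;> rw [hx] at this
    · simp [chi, flipCoord_apply, h, abs_of_nonneg (sub_nonneg.mpr this)]
    · simp [chi, flipCoord_apply, h, abs_of_nonpos (sub_nonpos.mpr this)]
  have hflip : ∑ x, g (flipCoord i x) * chi i x = -∑ x, g x * chi i x := by
    rw [← Equiv.sum_comp (flipCoord i) (fun x => g x * chi i x), ← sum_neg_distrib]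
    refine sum_congr rfl fun x _ => ?_
    rw [chi_flipCoord_self, mul_neg, neg_neg]
  have hsum : ∑ x, |g (flipCoord i x) - g x| = 2 * ∑ x, g x * chi i x := by
    simp only [hterm, sub_mul, sum_sub_distrib, hflip]
    ring
  have hnonneg : 0 ≤ ∑ x, g x * chi i x := by
    have := sum_nonneg fun x (_ : x ∈ univ) => abs_nonneg (g (flipCoord i x) - g x)
    linarith
  rw [hsum, abs_of_nonneg hnonneg]

theorem sum_abs_sub_flipCoord_of_isUnateIn {g : (Fin n → Bool) → ℝ} {i : Fin n}
    (hg : IsUnateIn i g) :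
    ∑ x, |g (flipCoord i x) - g x| = 2 * |∑ x, g x * chi i x| := by
  rcases hg with hg | hg
  · exact sum_abs_sub_flipCoord_of_monotone hg
  · have := sum_abs_sub_flipCoord_of_monotone (g := fun x => -g x) fun x => neg_le_neg (hg x)
    simpa [neg_add_eq_sub, abs_sub_comm, sum_neg_distrib] using this

theorem influenceCount_le_sum_abs_sub {g : (Fin n → Bool) → ℝ}
    (hg : ∀ x y, g x ≠ g y → 1 ≤ |g x - g y|) (i : Fin n) :
    (influenceCount g i : ℝ) ≤ ∑ x, |g (flipCoord i x) - g x| := by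
  rw [influenceCount, natCast_card_filter]
  refine sum_le_sum fun x _ => ?_
  split_ifs with h
  · exact hg _ _ h
  · exact abs_nonneg _

def evalAffine (c : Fin n → ℝ) (d : ℝ) (x : Fin n → Bool) : ℝ :=
  ∑ i, c i * (if x i then 1 else 0) + d

theorem evalAffine_update_true (c : Fin n → ℝ) (d : ℝ) (x : Fin n → Bool) (i : Fin n) :
    evalAffine c d (Function.update x i true) =
      evalAffine c d (Function.update x i false) + c i := by
  have h : ∀ j, c j * (if Function.update x i true j then 1 else 0) =
      c j * (if Function.update x i false j then 1 else 0) + if j = i then c i else 0 := by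
    intro j
    rcases eq_or_ne j i with rfl | hj
    · simp
    · simp [hj]
  simp only [evalAffine, h, sum_add_distrib, sum_ite_eq', mem_univ, if_true]
  ring

theorem isUnateIn_comp_evalAffine {β : Type*} [Preorder β] {φ : ℝ → β} (hφ : Monotone φ)
    (c : Fin n → ℝ) (d : ℝ) (i : Fin n) : IsUnateIn i fun x => φ (evalAffine c d x) := by
  rcases le_total 0 (c i) with hc | hc
  · exact Or.inl fun x => hφ (by rw [evalAffine_update_true]; linarith)
  · exact Or.inr fun x => hφ (by rw [evalAffine_update_true]; linarith)

theorem sum_influenceCount_sign_evalAffine_le (c : Fin n → ℝ) (d : ℝ) :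
    ∑ i, (influenceCount (fun x => Real.sign (evalAffine c d x)) i : ℝ) ≤
      2 * √n * 2 ^ n := by
  set g : (Fin n → Bool) → ℝ := fun x => Real.sign (evalAffine c d x)
  calc ∑ i, (influenceCount g i : ℝ)
      ≤ ∑ i, ∑ x, |g (flipCoord i x) - g x| := sum_le_sum fun i _ =>
        influenceCount_le_sum_abs_sub (fun _ _ => Real.one_le_abs_sign_sub_sign) i
    _ = ∑ i, 2 * |∑ x, g x * chi i x| := sum_congr rfl fun i _ =>
        sum_abs_sub_flipCoord_of_isUnateIn (isUnateIn_comp_evalAffine Real.sign_monotone c d i)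
    _ ≤ 2 * (√n * 2 ^ n) := by
        rw [← mul_sum]
        gcongr
        exact sum_abs_sum_mul_chi_le g fun x => Real.abs_sign_le_one _
    _ = 2 * √n * 2 ^ n := by ring

end BooleanCube

open BooleanCube in
theorem avgSens_of_sign_determined :
    ∃ C : ℝ, ∀ (n k : ℕ) (f : (Fin n → Bool) → Bool)
      (c : Fin k → Fin n → ℝ) (d : Fin k → ℝ) (G : (Fin k → ℝ) → Bool),
      (∀ x : Fin n → Bool,
        f x = G fun j => Real.sign (∑ i : Fin n, c j i * (if x i then 1 else 0) + d j)) →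
      avgSens n f ≤ C * k * Real.sqrt n := by
  refine ⟨2, fun n k f c d G hG => ?_⟩
  set g : Fin k → (Fin n → Bool) → ℝ := fun j x => Real.sign (evalAffine (c j) (d j) x)
  have hf : f = fun x => G fun j => g j x := funext hG
  have hsum : ∑ x, (sens n f x : ℝ) ≤ 2 * k * √n * 2 ^ n := by
    calc ∑ x, (sens n f x : ℝ) = ∑ i, (influenceCount f i : ℝ) := by
          exact_mod_cast sum_sens_eq_sum_influenceCount f
      _ ≤ ∑ i, ∑ j, (influenceCount (g j) i : ℝ) := sum_le_sum fun i _ => by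
          rw [hf]; exact_mod_cast influenceCount_comp_le G g i
      _ = ∑ j, ∑ i, (influenceCount (g j) i : ℝ) := sum_comm
      _ ≤ ∑ _j : Fin k, 2 * √n * 2 ^ n := sum_le_sum fun j _ =>
          sum_influenceCount_sign_evalAffine_le (c j) (d j)
      _ = 2 * k * √n * 2 ^ n := by simp only [sum_const, card_univ,
          Fintype.card_fin, nsmul_eq_mul]; ring
  rw [avgSens, div_le_iff₀ (by positivity)]
  exact hsum
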